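/- Let a₀, a₁, …, a_L be nonnegative reals, C ≥ 0, K ≥ 0, and τ = 1/L. Suppose a₀ ≤ C and for every 1 ≤ l ≤ L, a_l ≤ τ·K·∑_{k=0}^{l−1} a_k + C. Then for every 0 ≤ l ≤ L, a_l ≤ C·(K·exp(K) + 1). -/

import Mathlib

namespace NetworkGronwall

/-- Discrete Gronwall-type inequality: if `a 0 ≤ C` and
`a l ≤ τ * K * ∑_{k<l} a k + C` for `1 ≤ l ≤ L` with `τ = 1/L`, then
`a l ≤ C * (K * exp K + 1)` for all `l ≤ L`. -/
theorem discrete_gronwall (L : ℕ) (hL : 0 < L) (a : ℕ → ℝ) (C K : ℝ)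
    (ha : ∀ l, 0 ≤ a l) (hC : 0 ≤ C) (hK : 0 ≤ K)
    (h0 : a 0 ≤ C)
    (hrec : ∀ l, 1 ≤ l → l ≤ L →
      a l ≤ (1 / (L : ℝ)) * K * ∑ k ∈ Finset.range l, a k + C) :
    ∀ l ≤ L, a l ≤ C * (K * Real.exp K + 1) := by
  have hLpos : (0:ℝ) < L := by exact_mod_cast hL
  set x : ℝ := 1 + K / L with hxdef
  have hx1 : (1:ℝ) ≤ x := by
    have h : (0:ℝ) ≤ K / L := div_nonneg hK hLpos.le
    rw [hxdef]; linarith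
  have hx0 : (0:ℝ) ≤ x := by linarith
  have key : ∀ l, l ≤ L → a l ≤ C * x ^ l := by
    intro l
    induction l using Nat.strong_induction_on with
    | _ l ih =>
      intro hl
      rcases Nat.eq_zero_or_pos l with h | h
      · subst h; simpa using h0
      · have hsum : ∑ k ∈ Finset.range l, a k ≤ ∑ k ∈ Finset.range l, C * x ^ k := by
          apply Finset.sum_le_sum
          intro k hk
          exact ih k (Finset.mem_range.mp hk) (le_trans (Nat.le_of_lt (Finset.mem_range.mp hk)) hl)
        have h1 : a l ≤ (1 / (L : ℝ)) * K * ∑ k ∈ Finset.range l, a k + C := hrec l h hl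
        have h2 : (1 / (L : ℝ)) * K * ∑ k ∈ Finset.range l, a k
            ≤ (1 / (L : ℝ)) * K * ∑ k ∈ Finset.range l, C * x ^ k := by
          apply mul_le_mul_of_nonneg_left hsum
          positivity
        have hgeom : (∑ k ∈ Finset.range l, x ^ k) * (x - 1) = x ^ l - 1 := geom_sum_mul x l
        have hxm1 : x - 1 = K / L := by rw [hxdef]; ring
        have h3 : (1 / (L : ℝ)) * K * ∑ k ∈ Finset.range l, C * x ^ k
            = C * (x ^ l - 1) := by
          rw [← hgeom, hxm1, ← Finset.mul_sum]
          ring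
        calc a l ≤ (1 / (L : ℝ)) * K * ∑ k ∈ Finset.range l, a k + C := h1
          _ ≤ (1 / (L : ℝ)) * K * ∑ k ∈ Finset.range l, C * x ^ k + C := by linarith
          _ = C * (x ^ l - 1) + C := by rw [h3]
          _ = C * x ^ l := by ring
  intro l hl
  have hxL : x ^ l ≤ Real.exp K := by
    have h1 : x ^ l ≤ x ^ L := pow_le_pow_right₀ hx1 hl
    have h2 : x ≤ Real.exp (K / L) := by
      have := Real.add_one_le_exp (K / L)
      linarith
    have h3 : x ^ L ≤ (Real.exp (K / L)) ^ L := pow_le_pow_left₀ hx0 h2 L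
    have h4 : (Real.exp (K / L)) ^ L = Real.exp K := by
      rw [← Real.exp_nat_mul]
      congr 1
      field_simp
    linarith
  have hfinal : Real.exp K ≤ K * Real.exp K + 1 := by
    have h5 : 1 - K ≤ Real.exp (-K) := by
      have := Real.add_one_le_exp (-K)
      linarith
    have h6 : (1 - K) * Real.exp K ≤ Real.exp (-K) * Real.exp K :=
      mul_le_mul_of_nonneg_right h5 (Real.exp_pos K).le
    rw [← Real.exp_add] at h6
    simp at h6
    nlinarith [Real.exp_pos K]
  calc a l ≤ C * x ^ l := key l hl
    _ ≤ C * Real.exp K := by apply mul_le_mul_of_nonneg_left hxL hC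
    _ ≤ C * (K * Real.exp K + 1) := by apply mul_le_mul_of_nonneg_left hfinal hC
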